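/- arXiv:1901.00260 — 2 statements merged into one kernel-verified Lean document; each statement's English description precedes it below -/
import Mathlib

section
/- For K > 0, the derivative of φ₁(t) = t/(1 − exp(−K sinh t)) tends to 1 as t → +∞ and tends to 0 as t → −∞. -/
/-!
Write `E t = exp (-K sinh t)`. Since `E (-t) = (E t)⁻¹`, the function satisfies
`φ₁ (-t) = φ₁ t - t`, hence `φ₁' (-t) = 1 - φ₁' t` and the limit at `-∞` follows from the one
at `+∞`. There `φ₁' = (1 - E - K t cosh t E) / (1 - E)²` with `E → 0`, and `t cosh t E → 0`
because `t cosh t ≤ s (1 + s)` while `E = exp (-K s)`, for `s = sinh t → ∞`.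
-/

open Real Filter Topology

noncomputable def phi1 (K t : ℝ) : ℝ := t / (1 - exp (-K * sinh t))

lemma exp_neg_mul_sinh_ne_one {K t : ℝ} (hK : K ≠ 0) (ht : t ≠ 0) : exp (-K * sinh t) ≠ 1 := by
  simp [hK, ht]

-- `phi1 K 0 = 0 / 0 = 0`, so the identity also holds at `t = 0`.
lemma phi1_neg {K : ℝ} (hK : K ≠ 0) (t : ℝ) : phi1 K (-t) = phi1 K t - t := by
  rcases eq_or_ne t 0 with rfl | ht
  · simp [phi1]
  have hE1 : 1 - exp (-K * sinh t) ≠ 0 := sub_ne_zero.mpr (exp_neg_mul_sinh_ne_one hK ht).symm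
  have hE0 : exp (-K * sinh t) ≠ 0 := exp_ne_zero _
  rw [phi1, phi1, sinh_neg, show -K * -sinh t = -(-K * sinh t) by ring, exp_neg]
  generalize exp (-K * sinh t) = E at hE0 hE1 ⊢
  have hE1' : E - 1 ≠ 0 := by rwa [← neg_sub, neg_ne_zero]
  rw [inv_eq_one_div, one_sub_div hE0, div_div_eq_mul_div, div_sub' hE1]
  field_simp
  ring

lemma hasDerivAt_phi1 {K t : ℝ} (hK : K ≠ 0) (ht : t ≠ 0) :
    HasDerivAt (phi1 K)
      ((1 - exp (-K * sinh t) - K * (t * cosh t * exp (-K * sinh t))) /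
        (1 - exp (-K * sinh t)) ^ 2) t := by
  have hE : 1 - exp (-K * sinh t) ≠ 0 := sub_ne_zero.mpr (exp_neg_mul_sinh_ne_one hK ht).symm
  exact ((hasDerivAt_id' t).fun_div (((hasDerivAt_sinh t).const_mul (-K)).exp.const_sub 1)
    hE).congr_deriv (by ring)

lemma deriv_phi1_neg {K t : ℝ} (hK : K ≠ 0) (ht : t ≠ 0) :
    deriv (phi1 K) (-t) = 1 - deriv (phi1 K) t := by
  have h : HasDerivAt (fun s => phi1 K (-s)) (deriv (phi1 K) t - 1) t := by
    simpa only [phi1_neg hK] using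
      (hasDerivAt_phi1 hK ht).differentiableAt.hasDerivAt.fun_sub (hasDerivAt_id' t)
  have := deriv_comp_neg (f := phi1 K) (x := t)
  rw [h.deriv] at this
  linarith

lemma tendsto_sinh_atTop : Tendsto sinh atTop atTop :=
  tendsto_atTop_mono' atTop ((eventually_ge_atTop 0).mono fun _ => self_le_sinh_iff.mpr) tendsto_id

lemma tendsto_mul_cosh_mul_exp_neg_mul_sinh_atTop {K : ℝ} (hK : 0 < K) :
    Tendsto (fun t => t * cosh t * exp (-K * sinh t)) atTop (𝓝 0) := by
  have hdecay : Tendsto (fun s => s * (1 + s) * exp (-K * s)) atTop (𝓝 0) := by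
    have h := (tendsto_rpow_mul_exp_neg_mul_atTop_nhds_zero 1 K hK).add
      (tendsto_rpow_mul_exp_neg_mul_atTop_nhds_zero 2 K hK)
    rw [add_zero] at h
    refine h.congr fun s => ?_
    rw [rpow_one, rpow_two]
    ring
  refine squeeze_zero' ?_ ?_ (hdecay.comp tendsto_sinh_atTop)
  · filter_upwards [eventually_ge_atTop 0] with t ht
    have := cosh_pos t
    positivity
  · filter_upwards [eventually_ge_atTop 0] with t ht
    have hcosh : cosh t ≤ 1 + sinh t := by
      have := cosh_sub_sinh t
      have := exp_le_one_iff.mpr (neg_nonpos.mpr ht)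
      linarith
    have := self_le_sinh_iff.mpr ht
    have := sinh_nonneg_iff.mpr ht
    dsimp only [Function.comp_apply]
    gcongr

lemma tendsto_deriv_phi1_atTop {K : ℝ} (hK : 0 < K) : Tendsto (deriv (phi1 K)) atTop (𝓝 1) := by
  have hE : Tendsto (fun t => exp (-K * sinh t)) atTop (𝓝 0) :=
    tendsto_exp_atBot.comp (tendsto_sinh_atTop.const_mul_atTop_of_neg (neg_neg_of_pos hK))
  have h1E : Tendsto (fun t => 1 - exp (-K * sinh t)) atTop (𝓝 1) := by
    simpa using (tendsto_const_nhds (x := (1 : ℝ))).sub hE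
  have h := (h1E.sub ((tendsto_mul_cosh_mul_exp_neg_mul_sinh_atTop hK).const_mul K)).div
    (h1E.pow 2) (by norm_num)
  rw [mul_zero, sub_zero, one_pow, div_one] at h
  refine h.congr' ?_
  filter_upwards [eventually_gt_atTop 0] with t ht
  exact (hasDerivAt_phi1 hK.ne' ht.ne').deriv.symm

lemma tendsto_deriv_phi1_atBot {K : ℝ} (hK : 0 < K) : Tendsto (deriv (phi1 K)) atBot (𝓝 0) := by
  rw [← tendsto_comp_neg_atTop_iff, ← sub_self (1 : ℝ)]
  refine ((tendsto_deriv_phi1_atTop hK).const_sub 1).congr' ?_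
  filter_upwards [eventually_gt_atTop 0] with t ht
  exact (deriv_phi1_neg hK.ne' ht.ne').symm

theorem phi1_deriv_limits_at_infty (K : ℝ) (hK : 0 < K) :
    Tendsto (deriv (fun t : ℝ => t / (1 - Real.exp (-K * Real.sinh t)))) atTop (nhds 1) ∧
      Tendsto (deriv (fun t : ℝ => t / (1 - Real.exp (-K * Real.sinh t)))) atBot (nhds 0) :=
  ⟨tendsto_deriv_phi1_atTop hK, tendsto_deriv_phi1_atBot hK⟩
end

section
/- For constants α ≥ 0 and β > 0, the derivative of φ₂(t) = t/(1 − exp(−2t − α(1 − e^{−t}) − β(e^t − 1))) tends to 1 as t → +∞ and tends to 0 as t → −∞. -/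
/-!
For `t > 0` the exponent `g` of `φ₂ t = t / (1 - exp (g t))` satisfies `g t ≤ -2t` and
`|g' t| ≤ (2 + α + β) eᵗ`, so in `φ₂' = (1 - e^g + t g' e^g) / (1 - e^g)²` every term carrying
`e^g` decays like `t e⁻ᵗ` and `φ₂' → 1`. The limit at `-∞` reduces to this one through the
symmetry `g_{α,β} (-t) = -g_{β,α} t`, which gives `φ₂^{α,β} (-t) = φ₂^{β,α} t - t` and hence
`φ₂^{α,β}' (-t) = 1 - φ₂^{β,α}' t`.
-/

open Real Filter Topology

noncomputable def phi2Exponent (α β t : ℝ) : ℝ :=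
  -2 * t - α * (1 - exp (-t)) - β * (exp t - 1)

noncomputable def phi2 (α β t : ℝ) : ℝ :=
  t / (1 - exp (phi2Exponent α β t))

theorem hasDerivAt_div_one_sub_exp {g : ℝ → ℝ} {g' t : ℝ} (hg : HasDerivAt g g' t)
    (ht : g t ≠ 0) :
    HasDerivAt (fun s => s / (1 - exp (g s)))
      ((1 - exp (g t) + t * exp (g t) * g') / (1 - exp (g t)) ^ 2) t := by
  have hden : 1 - exp (g t) ≠ 0 := sub_ne_zero.2 fun h => ht ((exp_eq_one_iff _).1 h.symm)
  exact ((hasDerivAt_id' t).fun_div ((hasDerivAt_const t 1).fun_sub hg.exp) hden).congr_deriv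
    (by ring)

theorem hasDerivAt_phi2Exponent (α β t : ℝ) :
    HasDerivAt (phi2Exponent α β) (-2 - α * exp (-t) - β * exp t) t :=
  (((hasDerivAt_id' t).const_mul (-2)).fun_sub
    (((hasDerivAt_const t 1).fun_sub (hasDerivAt_neg' t).exp).const_mul α)).fun_sub
    (((hasDerivAt_exp t).fun_sub (hasDerivAt_const t 1)).const_mul β) |>.congr_deriv (by ring)

theorem phi2Exponent_neg (α β t : ℝ) : phi2Exponent α β (-t) = -phi2Exponent β α t := by
  simp only [phi2Exponent, neg_neg]
  ring

theorem phi2_neg {α β t : ℝ} (ht : phi2Exponent β α t ≠ 0) :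
    phi2 α β (-t) = phi2 β α t - t := by
  have hE : exp (phi2Exponent β α t) ≠ 1 := fun h => ht ((exp_eq_one_iff _).1 h)
  have h1 : 1 - exp (phi2Exponent β α t) ≠ 0 := sub_ne_zero.2 hE.symm
  have h2 : exp (phi2Exponent β α t) - 1 ≠ 0 := sub_ne_zero.2 hE
  rw [phi2, phi2, phi2Exponent_neg, exp_neg]
  field_simp
  ring

section Nonneg

variable {α β : ℝ}

theorem phi2Exponent_le (hα : 0 ≤ α) (hβ : 0 ≤ β) {t : ℝ} (ht : 0 ≤ t) :
    phi2Exponent α β t ≤ -2 * t := by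
  have h1 : exp (-t) ≤ 1 := exp_le_one_iff.2 (by linarith)
  have h2 : 1 ≤ exp t := one_le_exp ht
  unfold phi2Exponent
  nlinarith [mul_nonneg hα (sub_nonneg.2 h1), mul_nonneg hβ (sub_nonneg.2 h2)]

theorem abs_phi2ExponentDeriv_le (hα : 0 ≤ α) (hβ : 0 ≤ β) {t : ℝ} (ht : 0 ≤ t) :
    |-2 - α * exp (-t) - β * exp t| ≤ (2 + α + β) * exp t := by
  have h1 : exp (-t) ≤ 1 := exp_le_one_iff.2 (by linarith)
  have h2 : 1 ≤ exp t := one_le_exp ht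
  rw [abs_of_nonpos (by nlinarith [exp_pos (-t), exp_pos t])]
  nlinarith [mul_le_mul_of_nonneg_left h1 hα, mul_le_mul_of_nonneg_left h2 hα]

theorem tendsto_exp_phi2Exponent_atTop (hα : 0 ≤ α) (hβ : 0 ≤ β) :
    Tendsto (fun t => exp (phi2Exponent α β t)) atTop (𝓝 0) := by
  refine tendsto_exp_atBot.comp (tendsto_atBot_mono' _ ?_
    (tendsto_id.const_mul_atTop_of_neg (by norm_num : (-2 : ℝ) < 0)))
  filter_upwards [eventually_ge_atTop 0] with t ht
  exact phi2Exponent_le hα hβ ht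

theorem tendsto_mul_exp_phi2Exponent_mul_deriv_atTop (hα : 0 ≤ α) (hβ : 0 ≤ β) :
    Tendsto (fun t => t * exp (phi2Exponent α β t) * (-2 - α * exp (-t) - β * exp t))
      atTop (𝓝 0) := by
  have hdecay : Tendsto (fun t => (2 + α + β) * (t * exp (-t))) atTop (𝓝 0) := by
    simpa using (tendsto_pow_mul_exp_neg_atTop_nhds_zero 1).const_mul (2 + α + β)
  refine squeeze_zero_norm' ?_ hdecay
  filter_upwards [eventually_ge_atTop 0] with t ht
  have hE : exp (phi2Exponent α β t) ≤ exp (-2 * t) := exp_le_exp.2 (phi2Exponent_le hα hβ ht)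
  calc ‖t * exp (phi2Exponent α β t) * (-2 - α * exp (-t) - β * exp t)‖
      = t * exp (phi2Exponent α β t) * |-2 - α * exp (-t) - β * exp t| := by
        rw [Real.norm_eq_abs, abs_mul, abs_mul, abs_of_nonneg ht, abs_of_pos (exp_pos _)]
    _ ≤ t * exp (-2 * t) * ((2 + α + β) * exp t) := by
        gcongr
        exact abs_phi2ExponentDeriv_le hα hβ ht
    _ = (2 + α + β) * (t * exp (-t)) := by
        rw [show -t = -2 * t + t by ring, exp_add]
        ring

theorem tendsto_deriv_phi2_atTop (hα : 0 ≤ α) (hβ : 0 ≤ β) :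
    Tendsto (deriv (phi2 α β)) atTop (𝓝 1) := by
  set E := fun t => exp (phi2Exponent α β t)
  set g' := fun t => -2 - α * exp (-t) - β * exp t
  have hderiv : deriv (phi2 α β) =ᶠ[atTop]
      fun t => (1 - E t + t * E t * g' t) / (1 - E t) ^ 2 := by
    filter_upwards [eventually_gt_atTop 0] with t ht
    exact (hasDerivAt_div_one_sub_exp (hasDerivAt_phi2Exponent α β t)
      (by linarith [phi2Exponent_le hα hβ ht.le])).deriv
  have h1E : Tendsto (fun t => 1 - E t) atTop (𝓝 1) := by
    simpa using (tendsto_const_nhds (x := (1 : ℝ))).sub (tendsto_exp_phi2Exponent_atTop hα hβ)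
  have := (h1E.add (tendsto_mul_exp_phi2Exponent_mul_deriv_atTop hα hβ)).div (h1E.pow 2)
    (by norm_num)
  simpa using this.congr' hderiv.symm

theorem deriv_phi2_neg (hα : 0 ≤ α) (hβ : 0 ≤ β) {t : ℝ} (ht : 0 < t) :
    deriv (phi2 α β) (-t) = 1 - deriv (phi2 β α) t := by
  have hloc : (fun s => phi2 α β (-s)) =ᶠ[𝓝 t] fun s => phi2 β α s - s := by
    filter_upwards [lt_mem_nhds ht] with s hs
    exact phi2_neg (by linarith [phi2Exponent_le hβ hα hs.le])
  have hD : HasDerivAt (phi2 β α) (deriv (phi2 β α) t) t :=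
    (hasDerivAt_div_one_sub_exp (hasDerivAt_phi2Exponent β α t)
      (by linarith [phi2Exponent_le hβ hα ht.le])).differentiableAt.hasDerivAt
  have := hloc.deriv_eq
  rw [deriv_comp_neg, (hD.fun_sub (hasDerivAt_id' t)).deriv] at this
  linarith

theorem tendsto_deriv_phi2_atBot (hα : 0 ≤ α) (hβ : 0 ≤ β) :
    Tendsto (deriv (phi2 α β)) atBot (𝓝 0) := by
  rw [← tendsto_comp_neg_atTop_iff]
  have := (tendsto_deriv_phi2_atTop hβ hα).const_sub 1
  rw [sub_self] at this
  refine this.congr' ?_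
  filter_upwards [eventually_gt_atTop 0] with t ht
  exact (deriv_phi2_neg hα hβ ht).symm

end Nonneg

theorem phi2_deriv_limits_at_infty (α β : ℝ) (hα : 0 ≤ α) (hβ : 0 < β) :
    Tendsto (deriv (fun t : ℝ =>
        t / (1 - Real.exp (-2 * t - α * (1 - Real.exp (-t)) - β * (Real.exp t - 1)))))
      atTop (nhds 1) ∧
      Tendsto (deriv (fun t : ℝ =>
          t / (1 - Real.exp (-2 * t - α * (1 - Real.exp (-t)) - β * (Real.exp t - 1)))))
        atBot (nhds 0) :=
  ⟨tendsto_deriv_phi2_atTop hα hβ.le, tendsto_deriv_phi2_atBot hα hβ.le⟩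
end
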